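/- Let i ∈ ℕ₀ and suppose ℐ = ℐ¹ ∘ ⋯ ∘ ℐˡ is a composition of operators ℐʲ (1 ≤ j ≤ l) on an interval I_n, each of which is a projection onto polynomials of maximal degree r_{ℐʲ} (Assumption A6) and satisfies ∫_{I_n} ℐʲ_n((φ − ℐʲ_nφ)·ψ) dt = 0 for all ψ ∈ P_i(I_n) and all admissible φ (Assumption A7 with parameter i). Then ∫_{I_n} (φ − ℐ_nφ)·ψ dt = 0 for all ψ ∈ P_i(I_n) and all polynomials φ of degree at most min_{j ∈ 𝓜_i ∪ {l}} max{r_{ℐʲ}, r_ex^{ℐʲ} − i}, where 𝓜_i := { j : 1 ≤ j ≤ l−1 and max{r_{ℐʲ}, r_ex^{ℐʲ} − i} < min_{j+1 ≤ m ≤ l} r_{ℐᵐ} }; that is, r^int_{ℐ,i} ≥ min_{j ∈ 𝓜_i ∪ {l}} max{r_{ℐʲ}, r_ex^{ℐʲ} − i}. -/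

import Mathlib

open Set MeasureTheory
open scoped BigOperators RealInnerProductSpace

noncomputable section

/-- `ℝ^d` with the Euclidean norm. -/
abbrev Vec (d : ℕ) := EuclideanSpace ℝ (Fin d)

/-- `φ : ℝ → ℝ` is (the evaluation of) a polynomial of degree at most `s`
(`s : ℤ`; for `s < 0` this means the zero function). -/
def IsPolyR (s : ℤ) (φ : ℝ → ℝ) : Prop :=
  ∃ p : Polynomial ℝ, (∀ n : ℕ, s < (n : ℤ) → p.coeff n = 0) ∧ ∀ x : ℝ, φ x = p.eval x

/-- Vector-valued polynomials of degree at most `s`, componentwise. -/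
def IsPolyV {d : ℕ} (s : ℤ) (φ : ℝ → Vec d) : Prop :=
  ∀ i : Fin d, IsPolyR s fun x => φ x i

/-- Componentwise application of a (reference) integrator to a vector-valued function. -/
def vecI {d : ℕ} (Ih : (ℝ → ℝ) →ₗ[ℝ] ℝ) (φ : ℝ → Vec d) : Vec d :=
  WithLp.toLp 2 (fun i => Ih fun x => φ x i)

/-- Componentwise application of a (reference) approximation operator. -/
def vecOp {d : ℕ} (Ic : (ℝ → ℝ) →ₗ[ℝ] (ℝ → ℝ)) (φ : ℝ → Vec d) : ℝ → Vec d :=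
  fun x => WithLp.toLp 2 (fun i => Ic (fun y => φ y i) x)

/-- Affine map of the reference interval `(-1,1]` onto `(a,b]`. -/
def Tmap (a b x : ℝ) : ℝ := (a + b) / 2 + (b - a) / 2 * x

/-- Inverse of `Tmap a b`. -/
def Tinv (a b x : ℝ) : ℝ := (2 * x - (a + b)) / (b - a)

/-- Local (vector-valued) integrator `I_n` on `(a,b]`. -/
def locI {d : ℕ} (Ih : (ℝ → ℝ) →ₗ[ℝ] ℝ) (a b : ℝ) (φ : ℝ → Vec d) : Vec d :=
  ((b - a) / 2) • vecI Ih (φ ∘ Tmap a b)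

/-- Local scalar integrator on `(a,b]`. -/
def locIs (Ih : (ℝ → ℝ) →ₗ[ℝ] ℝ) (a b : ℝ) (g : ℝ → ℝ) : ℝ :=
  (b - a) / 2 * Ih (g ∘ Tmap a b)

/-- Local approximation operator `ℐ_n` on `(a,b]` (vector-valued). -/
def locOp {d : ℕ} (Ic : (ℝ → ℝ) →ₗ[ℝ] (ℝ → ℝ)) (a b : ℝ) (φ : ℝ → Vec d) : ℝ → Vec d :=
  fun x => vecOp Ic (φ ∘ Tmap a b) (Tinv a b x)

/-- Local approximation operator `ℐ_n` on `(a,b]` (scalar). -/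
def locOpR (Ic : (ℝ → ℝ) →ₗ[ℝ] (ℝ → ℝ)) (a b : ℝ) (φ : ℝ → ℝ) : ℝ → ℝ :=
  fun x => Ic (φ ∘ Tmap a b) (Tinv a b x)

/-- Supremum of the (Euclidean) norm over a set of times. -/
def supNorm {d : ℕ} (s : Set ℝ) (φ : ℝ → Vec d) : ℝ := ⨆ x : s, ‖φ (x : ℝ)‖

/-- Supremum of the absolute value over a set of times. -/
def supAbs (s : Set ℝ) (g : ℝ → ℝ) : ℝ := ⨆ x : s, |g (x : ℝ)|

/-- `k_𝒥 = max{⌊k/2⌋ − 1, k_𝓘, k_ℐ}`. -/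
def kJ (k : ℤ) (kI kIc : ℕ) : ℕ := max (max (k.fdiv 2 - 1).toNat kI) kIc

/-- Assumption A1 on the reference integrator. -/
def AssumptionA1 (Ih : (ℝ → ℝ) →ₗ[ℝ] ℝ) (r k : ℤ) : Prop :=
  ∀ ψ : ℝ → ℝ, IsPolyR (r - max 1 k) ψ →
    (∀ φ : ℝ → ℝ, IsPolyR (r - max 1 k) φ →
      Ih (fun x => (1 - x) ^ (k.fdiv 2).toNat * (1 + x) ^ ((k - 1).fdiv 2).natAbs *
        (ψ x * φ x)) = 0) →
    ∀ x : ℝ, ψ x = 0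

/-- Assumption A2 on the reference integrator. -/
def AssumptionA2 (d : ℕ) (Ih : (ℝ → ℝ) →ₗ[ℝ] ℝ) (kI : ℕ) (C0 : ℝ) : Prop :=
  ∀ φ : ℝ → Vec d, ContDiffOn ℝ (kI : ℕ∞) φ (Icc (-1 : ℝ) 1) →
    ‖vecI Ih φ‖ ≤ C0 * ∑ j ∈ Finset.range (kI + 1),
      supNorm (Icc (-1 : ℝ) 1) (iteratedDerivWithin j φ (Icc (-1 : ℝ) 1))

/-- Assumption A3 on the reference approximation operator. -/
def AssumptionA3 (d : ℕ) (Ic : (ℝ → ℝ) →ₗ[ℝ] (ℝ → ℝ)) (kI kIc : ℕ) (C1 : ℝ) : Prop :=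
  ∀ l : ℕ, l ≤ kI → ∀ φ : ℝ → Vec d,
    ContDiffOn ℝ ((max kIc l : ℕ) : ℕ∞) φ (Icc (-1 : ℝ) 1) →
    supNorm (Icc (-1 : ℝ) 1) (iteratedDerivWithin l (vecOp Ic φ) (Icc (-1 : ℝ) 1)) ≤
      C1 * ∑ j ∈ Finset.range (max kIc l + 1),
        supNorm (Icc (-1 : ℝ) 1) (iteratedDerivWithin j φ (Icc (-1 : ℝ) 1))

/-- Assumption A4, with smoothness level `m` playing the role of `k_𝒥`. -/
def AssumptionA4 (d : ℕ) (f : ℝ → Vec d → Vec d) (t0 T C2 : ℝ) (m : ℕ) : Prop :=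
  ∀ i : ℕ, i ≤ m → ∀ v w : ℝ → Vec d, ContDiff ℝ (⊤ : ℕ∞) v → ContDiff ℝ (⊤ : ℕ∞) w →
    ∀ᵐ s ∂(volume.restrict (Icc t0 (t0 + T))),
      ‖iteratedDeriv i (fun x => f x (v x) - f x (w x)) s‖ ≤
        C2 * ∑ l ∈ Finset.range (i + 1), ‖iteratedDeriv l (fun x => v x - w x) s‖

/-- Assumption A5a, stated for all local intervals. -/
def AssumptionA5a (d : ℕ) (Ic : (ℝ → ℝ) →ₗ[ℝ] (ℝ → ℝ)) (kI kIc : ℕ)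
    (K : ℕ) (th : Fin (K + 1) → ℝ) (Kt : Fin (K + 1) → ℕ) (C11 C12 : ℝ) : Prop :=
  Function.Injective th ∧ (∀ m, th m ∈ Icc (-1 : ℝ) 1) ∧
  ∀ a b : ℝ, a < b → b - a ≤ 1 → ∀ l : ℕ, l ≤ kI →
    ∀ φ : ℝ → Vec d, ContDiffOn ℝ (kIc : ℕ∞) φ (Icc a b) →
      ContDiffOn ℝ (l : ℕ∞) (locOp Ic a b φ) (Icc a b) ∧
      ((b - a) / 2) ^ l *
          supNorm (Ioc a b) (iteratedDerivWithin l (locOp Ic a b φ) (Icc a b)) ≤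
        C11 * ∑ m : Fin (K + 1), ∑ j ∈ Finset.range (Kt m + 1),
            ((b - a) / 2) ^ j *
              ‖iteratedDerivWithin j φ (Icc a b) (Tmap a b (th m))‖ +
        C12 * supNorm (Ioc a b) φ

/-- The conditions defining `Ĵ v` on the reference interval. -/
def JCondRef (Ih : (ℝ → ℝ) →ₗ[ℝ] ℝ) (Ic : (ℝ → ℝ) →ₗ[ℝ] (ℝ → ℝ)) (r k : ℤ)
    (v w : ℝ → ℝ) : Prop :=
  IsPolyR r w ∧
  (1 ≤ k → ∀ i : ℕ, (i : ℤ) ≤ (k - 1).fdiv 2 →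
    iteratedDeriv i w (-1) = iteratedDerivWithin i v (Icc (-1 : ℝ) 1) (-1)) ∧
  (2 ≤ k → ∀ i : ℕ, 1 ≤ i → (i : ℤ) ≤ k.fdiv 2 →
    iteratedDeriv i w 1 = iteratedDerivWithin i v (Icc (-1 : ℝ) 1) 1) ∧
  (∀ φ : ℝ → ℝ, IsPolyR (r - k) φ →
    Ih (fun x => deriv w x * φ x) + (if k = 0 then w (-1) * φ (-1) else 0) =
    Ih (fun x => Ic (derivWithin v (Icc (-1 : ℝ) 1)) x * φ x) +
      (if k = 0 then v (-1) * φ (-1) else 0))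

/-- The conditions defining the local approximation `J_n v` on `(a,b]`. -/
def JCondLoc (d : ℕ) (Ih : (ℝ → ℝ) →ₗ[ℝ] ℝ) (Ic : (ℝ → ℝ) →ₗ[ℝ] (ℝ → ℝ)) (r k : ℤ)
    (a b : ℝ) (v w : ℝ → Vec d) : Prop :=
  IsPolyV r w ∧
  (1 ≤ k → ∀ i : ℕ, (i : ℤ) ≤ (k - 1).fdiv 2 →
    iteratedDeriv i w a = iteratedDerivWithin i v (Icc a b) a) ∧
  (2 ≤ k → ∀ i : ℕ, 1 ≤ i → (i : ℤ) ≤ k.fdiv 2 →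
    iteratedDeriv i w b = iteratedDerivWithin i v (Icc a b) b) ∧
  (∀ φ : ℝ → Vec d, IsPolyV (r - k) φ →
    locIs Ih a b (fun x => ⟪deriv w x, φ x⟫) +
        (if k = 0 then ⟪w a, φ a⟫ else 0) =
      locIs Ih a b (fun x => ⟪locOp Ic a b (derivWithin v (Icc a b)) x, φ x⟫) +
        (if k = 0 then ⟪v a, φ a⟫ else 0))

/-- The conditions defining `P̂ v` on the reference interval. -/
def PCondRef (Ih : (ℝ → ℝ) →ₗ[ℝ] ℝ) (Ic : (ℝ → ℝ) →ₗ[ℝ] (ℝ → ℝ)) (r k : ℤ)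
    (v w : ℝ → ℝ) : Prop :=
  IsPolyR (r - 1) w ∧
  (3 ≤ k → ∀ i : ℕ, (i : ℤ) ≤ (k - 1).fdiv 2 - 1 →
    iteratedDeriv i w (-1) = iteratedDerivWithin i v (Icc (-1 : ℝ) 1) (-1)) ∧
  (2 ≤ k → ∀ i : ℕ, (i : ℤ) ≤ k.fdiv 2 - 1 →
    iteratedDeriv i w 1 = iteratedDerivWithin i v (Icc (-1 : ℝ) 1) 1) ∧
  (∀ φ : ℝ → ℝ, IsPolyR (r - k) φ → (k = 0 → φ (-1) = 0) →
    Ih (fun x => w x * φ x) = Ih (fun x => Ic v x * φ x))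

/-- The conditions defining the local approximation `P_n v` on `(a,b]`. -/
def PCondLoc (d : ℕ) (Ih : (ℝ → ℝ) →ₗ[ℝ] ℝ) (Ic : (ℝ → ℝ) →ₗ[ℝ] (ℝ → ℝ)) (r k : ℤ)
    (a b : ℝ) (v w : ℝ → Vec d) : Prop :=
  IsPolyV (r - 1) w ∧
  (3 ≤ k → ∀ i : ℕ, (i : ℤ) ≤ (k - 1).fdiv 2 - 1 →
    iteratedDeriv i w a = iteratedDerivWithin i v (Icc a b) a) ∧
  (2 ≤ k → ∀ i : ℕ, (i : ℤ) ≤ k.fdiv 2 - 1 →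
    iteratedDeriv i w b = iteratedDerivWithin i v (Icc a b) b) ∧
  (∀ φ : ℝ → Vec d, IsPolyV (r - k) φ → (k = 0 → φ a = 0) →
    locIs Ih a b (fun x => ⟪w x, φ x⟫) =
      locIs Ih a b (fun x => ⟪locOp Ic a b v x, φ x⟫))

/-- The local variational time discretization problem on `(a,b]` with incoming value `Uprev`. -/
def LocalVTD (d : ℕ) (Ih : (ℝ → ℝ) →ₗ[ℝ] ℝ) (Ic : (ℝ → ℝ) →ₗ[ℝ] (ℝ → ℝ)) (r k : ℤ)
    (a b : ℝ) (f : ℝ → Vec d → Vec d) (Uprev : Vec d) (U : ℝ → Vec d) : Prop :=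
  IsPolyV r U ∧
  (1 ≤ k → U a = Uprev) ∧
  (2 ≤ k → ∀ i : ℕ, (i : ℤ) ≤ k.fdiv 2 - 1 →
    iteratedDeriv (i + 1) U b = iteratedDeriv i (fun s => f s (U s)) b) ∧
  (3 ≤ k → ∀ i : ℕ, (i : ℤ) ≤ (k - 1).fdiv 2 - 1 →
    iteratedDeriv (i + 1) U a = iteratedDeriv i (fun s => f s (U s)) a) ∧
  (∀ φ : ℝ → Vec d, IsPolyV (r - k) φ →
    locIs Ih a b (fun s => ⟪deriv U s, φ s⟫) +
        (if k = 0 then ⟪U a - Uprev, φ a⟫ else 0) =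
      locIs Ih a b (fun s => ⟪locOp Ic a b (fun x => f x (U x)) s, φ s⟫))

/-- The global discrete solution of the variational time discretization:
`P n` is the local polynomial on `I_n = (t_{n-1}, t_n]`. -/
def IsVTDSolution (d : ℕ) (Ih : (ℝ → ℝ) →ₗ[ℝ] ℝ) (Ic : (ℝ → ℝ) →ₗ[ℝ] (ℝ → ℝ))
    (r k : ℤ) (t : ℕ → ℝ) (N : ℕ) (f : ℝ → Vec d → Vec d) (u0 : Vec d)
    (P : ℕ → ℝ → Vec d) : Prop :=
  ∀ n : ℕ, 1 ≤ n → n ≤ N →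
    LocalVTD d Ih Ic r k (t (n - 1)) (t n) f
      (if n = 1 then u0 else P (n - 1) (t (n - 1))) (P n)

/-- Exactness of the local integrator on polynomials of degree at most `ρ`. -/
def QuadExact (Ih : (ℝ → ℝ) →ₗ[ℝ] ℝ) (a b : ℝ) (ρ : ℤ) : Prop :=
  ∀ φ : ℝ → ℝ, IsPolyR ρ φ → (∫ x in Ioc a b, φ x) = locIs Ih a b φ

/-- `I_n[φ ψ] = I_n[(ℐ_n φ) ψ]` for all `φ ∈ P_ρ` and `ψ ∈ P_i` (the property defining
`r^𝓘_{ℐ,i}`). -/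
def QuadInterpExact (Ih : (ℝ → ℝ) →ₗ[ℝ] ℝ) (Ic : (ℝ → ℝ) →ₗ[ℝ] (ℝ → ℝ))
    (a b : ℝ) (ρ : ℤ) (i : ℕ) : Prop :=
  ∀ φ : ℝ → ℝ, IsPolyR ρ φ → ∀ ψ : ℝ → ℝ, IsPolyR (i : ℤ) ψ →
    locIs Ih a b (fun x => φ x * ψ x) = locIs Ih a b (fun x => locOpR Ic a b φ x * ψ x)

/-- The defining interpolation conditions of the Hermite-type operator `𝓘ᵃᵖᵖ_n` on `(a,b]`. -/
def IsIapp (d : ℕ) (k : ℤ) (K : ℕ) (th : Fin (K + 1) → ℝ) (Kt : Fin (K + 1) → ℕ)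
    (a b : ℝ) (R : ℕ) (J : (ℝ → Vec d) → (ℝ → Vec d)) : Prop :=
  ∀ φ : ℝ → Vec d, ContDiff ℝ (⊤ : ℕ∞) φ →
    IsPolyV (R : ℤ) (J φ) ∧
    (∀ l : ℕ, (l : ℤ) ≤ k.fdiv 2 - 1 → iteratedDeriv l (J φ) b = iteratedDeriv l φ b) ∧
    (∀ l : ℕ, (l : ℤ) ≤ (k - 1).fdiv 2 - 1 →
      iteratedDeriv l (J φ) a = iteratedDeriv l φ a) ∧
    (∀ m : Fin (K + 1), ∀ l : ℕ, l ≤ Kt m →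
      iteratedDeriv l (J φ) (Tmap a b (th m)) = iteratedDeriv l φ (Tmap a b (th m)))

/-- Composition `ℐ¹ ∘ ⋯ ∘ ℐˡ` of a finite family of operators. -/
def compOps (l : ℕ) (Ops : Fin l → ((ℝ → ℝ) →ₗ[ℝ] (ℝ → ℝ))) : (ℝ → ℝ) → (ℝ → ℝ) :=
  (List.ofFn (fun j : Fin l => (Ops j : (ℝ → ℝ) → (ℝ → ℝ)))).foldr (· ∘ ·) id

/-!
Write `ℐ = ℐ¹ ∘ ℐ'` with `ℐ' = ℐ² ∘ ⋯ ∘ ℐˡ` and split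
`φ - ℐφ = (φ - ℐ'φ) + (ℐ'φ - ℐ¹(ℐ'φ))`. The first part is handled by induction on `l`.
For the second, `ℐ'φ` has degree at most `s₁ = max{r_{ℐ¹}, r_ex^{ℐ¹} - i}`: either `1 ∈ 𝓜_i`,
so `φ ∈ P_{s₁}` and `ℐ'` does not raise degrees (A6), or some later `r_{ℐᵐ} ≤ s₁` and
`ℐ'φ ∈ P_{r_{ℐᵐ}}`. A single operator `ℐʲ` is then orthogonal to `P_i` on `P_{sⱼ}`: either
`φ ∈ P_{r_{ℐʲ}}` is reproduced, or `(φ - ℐʲφ) ψ ∈ P_{r_ex}`, whose integral equals that of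
`ℐʲ((φ - ℐʲφ) ψ)`, which vanishes by A7.
-/

namespace IsPolyR

variable {s t : ℤ} {φ χ : ℝ → ℝ}

lemma mono (h : s ≤ t) (hφ : IsPolyR s φ) : IsPolyR t φ :=
  let ⟨p, hp, hφp⟩ := hφ
  ⟨p, fun n hn => hp n (h.trans_lt hn), hφp⟩

lemma sub (hφ : IsPolyR s φ) (hχ : IsPolyR s χ) : IsPolyR s fun x => φ x - χ x := by
  obtain ⟨p, hp, hφp⟩ := hφ
  obtain ⟨q, hq, hχq⟩ := hχ
  exact ⟨p - q, fun n hn => by rw [Polynomial.coeff_sub, hp n hn, hq n hn, sub_zero],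
    fun x => by simp only [hφp, hχq, Polynomial.eval_sub]⟩

lemma mul (hφ : IsPolyR s φ) (hχ : IsPolyR t χ) : IsPolyR (s + t) fun x => φ x * χ x := by
  obtain ⟨p, hp, hφp⟩ := hφ
  obtain ⟨q, hq, hχq⟩ := hχ
  refine ⟨p * q, fun n hn => ?_, fun x => by simp only [hφp, hχq, Polynomial.eval_mul]⟩
  rw [Polynomial.coeff_mul]
  refine Finset.sum_eq_zero fun kl hkl => ?_
  have hsum : (kl.1 : ℤ) + kl.2 = n := by
    exact_mod_cast Finset.HasAntidiagonal.mem_antidiagonal.mp hkl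
  rcases lt_or_ge s kl.1 with hk | hk
  · rw [hp _ hk, zero_mul]
  · rw [hq _ (by omega), mul_zero]

lemma contDiff (hφ : IsPolyR s φ) : ContDiff ℝ (⊤ : ℕ∞) φ := by
  obtain ⟨p, -, hφp⟩ := hφ
  simpa only [funext hφp, Polynomial.coe_aeval_eq_eval] using p.contDiff_aeval (𝕜 := ℝ) _

lemma continuous (hφ : IsPolyR s φ) : Continuous φ := by
  obtain ⟨p, -, hφp⟩ := hφ
  simpa only [funext hφp] using p.continuous

end IsPolyR

-- Assumption A6 with `r = r_ℐ`.
structure IsPolyProjection (O : (ℝ → ℝ) → ℝ → ℝ) (r : ℤ) : Prop where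
  map_eq_self : ∀ φ, IsPolyR r φ → O φ = φ
  isPolyR_map : ∀ (s : ℤ) φ, IsPolyR s φ → IsPolyR r (O φ)

namespace IsPolyProjection

variable {O : (ℝ → ℝ) → ℝ → ℝ} {r : ℤ}

lemma isPolyR_map_of_isPolyR (hO : IsPolyProjection O r) {t : ℤ} {φ : ℝ → ℝ}
    (hφ : IsPolyR t φ) : IsPolyR t (O φ) := by
  rcases le_or_gt t r with h | h
  · rwa [hO.map_eq_self φ (hφ.mono h)]
  · exact (hO.isPolyR_map t φ hφ).mono h.le

lemma integral_sub_mul_eq_zero (hO : IsPolyProjection O r) {a b : ℝ} {i : ℕ} {rex : ℤ}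
    (hex : ∀ φ, IsPolyR rex φ → ∫ x in Ioc a b, φ x = ∫ x in Ioc a b, O φ x)
    (hA7 : ∀ φ : ℝ → ℝ, ContDiff ℝ (⊤ : ℕ∞) φ → ∀ ψ : ℝ → ℝ, IsPolyR i ψ →
      ∫ x in Ioc a b, O (fun y => (φ y - O φ y) * ψ y) x = 0)
    {φ ψ : ℝ → ℝ} (hφ : IsPolyR (max r (rex - i)) φ) (hψ : IsPolyR i ψ) :
    ∫ x in Ioc a b, (φ x - O φ x) * ψ x = 0 := by
  rcases le_or_gt (rex - i) r with h | h
  · simp [hO.map_eq_self φ (by rwa [max_eq_left h] at hφ)]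
  · rw [max_eq_right h.le] at hφ
    have hdefect : IsPolyR rex fun x => (φ x - O φ x) * ψ x := by
      simpa using (hφ.sub ((hO.isPolyR_map _ φ hφ).mono h.le)).mul hψ
    exact (hex _ hdefect).trans (hA7 φ hφ.contDiff ψ hψ)

end IsPolyProjection

@[simp]
lemma compOps_zero (Ops : Fin 0 → (ℝ → ℝ) →ₗ[ℝ] ℝ → ℝ) (φ : ℝ → ℝ) :
    compOps 0 Ops φ = φ := by
  simp [compOps]

lemma compOps_succ {l : ℕ} (Ops : Fin (l + 1) → (ℝ → ℝ) →ₗ[ℝ] ℝ → ℝ) (φ : ℝ → ℝ) :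
    compOps (l + 1) Ops φ = Ops 0 (compOps l (fun j => Ops j.succ) φ) := by
  simp [compOps, List.ofFn_succ]

section Composition

variable {l : ℕ} {Ops : Fin l → (ℝ → ℝ) →ₗ[ℝ] ℝ → ℝ} {rI : Fin l → ℤ}

lemma isPolyR_compOps (hOps : ∀ j, IsPolyProjection (Ops j) (rI j)) {t : ℤ} {φ : ℝ → ℝ}
    (hφ : IsPolyR t φ) : IsPolyR t (compOps l Ops φ) := by
  induction l with
  | zero => simpa
  | succ l ih =>
    rw [compOps_succ]
    exact (hOps 0).isPolyR_map_of_isPolyR (ih (fun j => hOps j.succ))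

lemma isPolyR_rI_compOps (hOps : ∀ j, IsPolyProjection (Ops j) (rI j)) {t : ℤ}
    {φ : ℝ → ℝ} (hφ : IsPolyR t φ) (j : Fin l) : IsPolyR (rI j) (compOps l Ops φ) := by
  induction l with
  | zero => exact j.elim0
  | succ l ih =>
    rw [compOps_succ]
    induction j using Fin.cases with
    | zero => exact (hOps 0).isPolyR_map _ _ (isPolyR_compOps (fun j => hOps j.succ) hφ)
    | succ j => exact (hOps 0).isPolyR_map_of_isPolyR (ih (fun j => hOps j.succ) j)

lemma integral_sub_compOps_mul_eq_zero (hOps : ∀ j, IsPolyProjection (Ops j) (rI j))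
    {a b : ℝ} {s : Fin l → ℤ} {ψ : ℝ → ℝ} (hψ : Continuous ψ)
    (hs : ∀ j φ, IsPolyR (s j) φ → ∫ x in Ioc a b, (φ x - Ops j φ x) * ψ x = 0)
    {φ : ℝ → ℝ} (hφ : ∀ j, (∀ m, j < m → s j < rI m) → IsPolyR (s j) φ) :
    ∫ x in Ioc a b, (φ x - compOps l Ops φ x) * ψ x = 0 := by
  induction l with
  | zero => simp
  | succ l ih =>
    set T := compOps l (fun j => Ops j.succ)
    have hOps' : ∀ j : Fin l, IsPolyProjection (Ops j.succ) (rI j.succ) := fun j => hOps j.succ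
    have hφpoly : IsPolyR (s (Fin.last l)) φ :=
      hφ _ fun m hm => absurd hm (Fin.le_last m).not_gt
    have hTφ : IsPolyR (s 0) (T φ) := by
      by_cases h0 : ∀ m, 0 < m → s 0 < rI m
      · exact isPolyR_compOps hOps' (hφ 0 h0)
      · push Not at h0
        obtain ⟨m, hm, hle⟩ := h0
        obtain ⟨k, rfl⟩ := Fin.exists_succ_eq.mpr hm.ne'
        exact (isPolyR_rI_compOps hOps' hφpoly k).mono hle
    have htail : ∫ x in Ioc a b, (φ x - T φ x) * ψ x = 0 := by
      refine ih hOps' (fun j => hs j.succ) fun j hj => hφ j.succ fun m hm => ?_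
      induction m using Fin.cases with
      | zero => exact absurd hm (Fin.succ_pos j).not_gt
      | succ m => exact hj m (Fin.succ_lt_succ_iff.mp hm)
    have hφc := hφpoly.continuous
    have hTc := (isPolyR_compOps hOps' hφpoly).continuous
    have hOTc := ((hOps 0).isPolyR_map _ _ hTφ).continuous
    calc ∫ x in Ioc a b, (φ x - compOps (l + 1) Ops φ x) * ψ x
        = ∫ x in Ioc a b, ((φ x - T φ x) * ψ x + (T φ x - Ops 0 (T φ) x) * ψ x) := by
          simp only [compOps_succ, ← add_mul, sub_add_sub_cancel, T]
      _ = (∫ x in Ioc a b, (φ x - T φ x) * ψ x) +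
            ∫ x in Ioc a b, (T φ x - Ops 0 (T φ) x) * ψ x :=
          integral_add ((hφc.sub hTc).mul hψ).integrableOn_Ioc
            ((hTc.sub hOTc).mul hψ).integrableOn_Ioc
      _ = 0 := by rw [htail, hs 0 _ hTφ, add_zero]

end Composition

theorem stmt_15_general (i : ℕ) (a b : ℝ) (l : ℕ)
    (Ops : Fin l → ((ℝ → ℝ) →ₗ[ℝ] (ℝ → ℝ))) (rI rex : Fin l → ℤ)
    (hA6rep : ∀ j : Fin l, ∀ φ : ℝ → ℝ, IsPolyR (rI j) φ → Ops j φ = φ)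
    (hA6into : ∀ j : Fin l, ∀ (s : ℤ) (φ : ℝ → ℝ), IsPolyR s φ → IsPolyR (rI j) (Ops j φ))
    (hex : ∀ j : Fin l, ∀ φ : ℝ → ℝ, IsPolyR (rex j) φ →
      (∫ x in Ioc a b, φ x) = ∫ x in Ioc a b, Ops j φ x)
    (hA7 : ∀ j : Fin l, ∀ φ : ℝ → ℝ, ContDiff ℝ (⊤ : ℕ∞) φ →
      ∀ ψ : ℝ → ℝ, IsPolyR (i : ℤ) ψ →
        (∫ x in Ioc a b, Ops j (fun y => (φ y - Ops j φ y) * ψ y) x) = 0) :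
    ∀ φ : ℝ → ℝ,
      (∀ j : Fin l, (∀ m : Fin l, j < m → max (rI j) (rex j - (i : ℤ)) < rI m) →
        IsPolyR (max (rI j) (rex j - (i : ℤ))) φ) →
      ∀ ψ : ℝ → ℝ, IsPolyR (i : ℤ) ψ →
        (∫ x in Ioc a b, (φ x - compOps l Ops φ x) * ψ x) = 0 := by
  intro φ hφ ψ hψ
  have hOps j : IsPolyProjection (Ops j) (rI j) := ⟨hA6rep j, hA6into j⟩
  exact integral_sub_compOps_mul_eq_zero hOps hψ.continuous
    (fun j _ hχ => (hOps j).integral_sub_mul_eq_zero (hex j) (hA7 j) hχ hψ) hφ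

/-- Lemma 4.13, composition part: for a composition
`ℐ = ℐ¹ ∘ ⋯ ∘ ℐˡ` of operators each satisfying Assumptions A6 and A7 (with parameter
`i`), one has `∫ (φ − ℐφ) ψ = 0` for all `ψ ∈ P_i` and all polynomials `φ` of degree at
most `min_{j ∈ 𝓜_i ∪ {l}} max{r_{ℐʲ}, r_ex^{ℐʲ} − i}`.  The membership
`j ∈ 𝓜_i ∪ {l}` is encoded by the condition `∀ m > j, max{r_{ℐʲ}, r_ex^{ℐʲ} − i} < r_{ℐᵐ}`
(vacuously true for the last index). -/
theorem stmt_15 (i : ℕ) (a b : ℝ) (hab : a < b) (l : ℕ) (hl : 1 ≤ l)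
    (Ops : Fin l → ((ℝ → ℝ) →ₗ[ℝ] (ℝ → ℝ))) (rI rex : Fin l → ℤ)
    (hA6rep : ∀ j : Fin l, ∀ φ : ℝ → ℝ, IsPolyR (rI j) φ → Ops j φ = φ)
    (hA6into : ∀ j : Fin l, ∀ (s : ℤ) (φ : ℝ → ℝ), IsPolyR s φ → IsPolyR (rI j) (Ops j φ))
    (hex : ∀ j : Fin l, ∀ φ : ℝ → ℝ, IsPolyR (rex j) φ →
      (∫ x in Ioc a b, φ x) = ∫ x in Ioc a b, Ops j φ x)
    (hA7 : ∀ j : Fin l, ∀ φ : ℝ → ℝ, ContDiff ℝ (⊤ : ℕ∞) φ →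
      ∀ ψ : ℝ → ℝ, IsPolyR (i : ℤ) ψ →
        (∫ x in Ioc a b, Ops j (fun y => (φ y - Ops j φ y) * ψ y) x) = 0) :
    ∀ φ : ℝ → ℝ,
      (∀ j : Fin l, (∀ m : Fin l, j < m → max (rI j) (rex j - (i : ℤ)) < rI m) →
        IsPolyR (max (rI j) (rex j - (i : ℤ))) φ) →
      ∀ ψ : ℝ → ℝ, IsPolyR (i : ℤ) ψ →
        (∫ x in Ioc a b, (φ x - compOps l Ops φ x) * ψ x) = 0 :=
  stmt_15_general i a b l Ops rI rex hA6rep hA6into hex hA7
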